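/- arXiv:1501.05513 — 3 statements merged into one kernel-verified Lean document; each statement's English description precedes it below -/
import Mathlib

section
/- Let 𝔤 be the 3-dimensional real Lie algebra with basis {e₁,e₂,e₃} and nonzero brackets [e₁,e₂]=e₂+e₃, [e₁,e₃]=e₃. Then the space of derivations of 𝔤, expressed as matrices with respect to this basis, is exactly the set of matrices of the form [[0,0,0],[x₂₁,x₂₂,0],[x₃₁,x₃₂,x₂₂]] with x₂₁,x₂₂,x₃₁,x₃₂ ∈ ℝ. -/
open Matrix

/-- The bracket of 𝔯₃ on ℝ³ : [e₁,e₂]=e₂+e₃, [e₁,e₃]=e₃, [e₂,e₃]=0. -/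
def br3 (x y : Fin 3 → ℝ) : Fin 3 → ℝ :=
  ![0,
    x 0 * y 1 - x 1 * y 0,
    (x 0 * y 1 - x 1 * y 0) + (x 0 * y 2 - x 2 * y 0)]

/-- The derivations of 𝔯₃ are exactly the matrices
    [[0,0,0],[x₂₁,x₂₂,0],[x₃₁,x₃₂,x₂₂]]. -/
theorem derivations_r3 :
    {D : Matrix (Fin 3) (Fin 3) ℝ |
      ∀ x y, D.mulVec (br3 x y) = br3 (D.mulVec x) y + br3 x (D.mulVec y)} =
    {D : Matrix (Fin 3) (Fin 3) ℝ |
      ∃ x21 x22 x31 x32 : ℝ, D = !![0,0,0; x21,x22,0; x31,x32,x22]} := by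
  ext D
  simp only [Set.mem_setOf_eq]
  constructor
  · intro h
    have h12 := h ![1,0,0] ![0,1,0]
    have h13 := h ![1,0,0] ![0,0,1]
    have h23 := h ![0,1,0] ![0,0,1]
    have h12_0 := congrFun h12 0
    have h12_1 := congrFun h12 1
    have h12_2 := congrFun h12 2
    have h13_0 := congrFun h13 0
    have h13_2 := congrFun h13 2
    have h23_1 := congrFun h23 1
    simp [br3, mulVec, dotProduct, Fin.sum_univ_three] at h12_0 h12_1 h12_2 h13_0 h13_2 h23_1
    refine ⟨D 1 0, D 1 1, D 2 0, D 2 1, ?_⟩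
    have e02 : D 0 2 = 0 := by linarith
    have e01 : D 0 1 = 0 := by linarith
    have e00 : D 0 0 = 0 := by linarith
    have e12 : D 1 2 = 0 := by linarith
    have e22 : D 2 2 = D 1 1 := by linarith
    ext i j
    fin_cases i <;> fin_cases j <;>
      simp [e00, e01, e02, e12, e22]
  · rintro ⟨a, b, c, d, rfl⟩ x y
    funext i
    fin_cases i <;>
      simp [br3, mulVec, dotProduct, Fin.sum_univ_three] <;> ring
end

section
/- Let 𝔤 be the Lie algebra 𝔯₃ (ℝ³ with brackets [e₁,e₂]=e₂+e₃, [e₁,e₃]=e₃). Then the automorphism group of 𝔤, as matrices with respect to the basis {e₁,e₂,e₃}, is exactly the set of matrices [[1,0,0],[x₂₁,x₂₂,0],[x₃₁,x₃₂,x₂₂]] with x₂₂ ≠ 0. -/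
open Matrix

/-!
An automorphism `g` preserves the derived algebra `span {e₂, e₃}`, so its first row is
`(a, 0, 0)`. Since `g e₁ ≡ a e₁` modulo the abelian derived algebra, the `2 × 2` block `A` of `g`
on `span {e₂, e₃}` intertwines `ad e₁`, the unipotent Jordan block `J = !![1, 0; 1, 1]`, with
`a J`: `A J = a J A`. Comparing eigenvalues forces `a = 1`, and then `A` commutes with `J`, so it is
lower triangular with equal diagonal entries. The converse is a direct computation.
-/

theorem eq_one_and_lowerTriangular_of_mul_unipotent_eq_smul {K : Type*} [Field K]
    {A : Matrix (Fin 2) (Fin 2) K} {c : K} (hA : A.det ≠ 0)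
    (h : A * !![1, 0; 1, 1] = c • (!![1, 0; 1, 1] * A)) :
    c = 1 ∧ A 0 1 = 0 ∧ A 1 1 = A 0 0 := by
  rw [eta_fin_two A] at h
  simp only [cons_mul, vecMul_cons, head_cons, smul_cons, smul_eq_mul, mul_one, mul_zero,
    smul_empty, tail_cons, empty_vecMul, add_zero, add_cons, zero_add, empty_add_empty, empty_mul,
    Equiv.symm_apply_apply, one_smul, zero_smul, smul_of, EmbeddingLike.apply_eq_iff_eq,
    vecCons_inj, and_true] at h
  obtain ⟨⟨-, h01⟩, h10, h11⟩ := h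
  rw [det_fin_two] at hA
  have ht : A 0 1 = 0 := by
    by_contra ht
    have hc : c = 1 := (mul_left_eq_self₀.mp h01.symm).resolve_right ht
    subst hc
    exact ht (by linear_combination -h11)
  have hz : A 1 1 ≠ 0 := fun hz => hA (by rw [ht, hz]; ring)
  have hc : c = 1 := (mul_left_eq_self₀.mp (by simpa [ht] using h11.symm)).resolve_right hz
  subst hc
  exact ⟨rfl, ht, by linear_combination h10⟩

section

variable {g : Matrix (Fin 3) (Fin 3) ℝ}

theorem first_row_of_preserves_br3 (hb : ∀ x y, g *ᵥ br3 x y = br3 (g *ᵥ x) (g *ᵥ y)) :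
    g 0 1 = 0 ∧ g 0 2 = 0 := by
  have h12 := congrFun (hb ![1, 0, 0] ![0, 1, 0]) 0
  have h13 := congrFun (hb ![1, 0, 0] ![0, 0, 1]) 0
  simp only [mulVec, dotProduct, br3, cons_val_zero, cons_val_one, mul_one, mul_zero, sub_zero,
    cons_val, sub_self, add_zero, Fin.sum_univ_three, zero_add] at h12 h13
  constructor <;> linarith

theorem intertwines_of_preserves_br3 (hb : ∀ x y, g *ᵥ br3 x y = br3 (g *ᵥ x) (g *ᵥ y))
    (h01 : g 0 1 = 0) (h02 : g 0 2 = 0) :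
    !![g 1 1, g 1 2; g 2 1, g 2 2] * !![1, 0; 1, 1] =
      g 0 0 • (!![1, 0; 1, 1] * !![g 1 1, g 1 2; g 2 1, g 2 2]) := by
  have h12 := hb ![1, 0, 0] ![0, 1, 0]
  have h13 := hb ![1, 0, 0] ![0, 0, 1]
  simp only [br3, mulVec, dotProduct, Fin.sum_univ_three, funext_iff, Fin.forall_fin_succ,
    cons_val_zero, cons_val_one, cons_val, cons_val_succ, cons_val_fin_one, Fin.succ_zero_eq_one,
    Fin.succ_one_eq_two, mul_one, mul_zero, sub_zero, sub_self, add_zero, zero_add, h01, h02,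
    IsEmpty.forall_iff, and_true, true_and] at h12 h13
  obtain ⟨h11, h21⟩ := h12
  obtain ⟨h12, h22⟩ := h13
  ext i j
  fin_cases i <;> fin_cases j <;>
    simp only [Fin.zero_eta, Fin.mk_one, cons_mul, vecMul_cons, head_cons, smul_cons, smul_eq_mul,
      mul_one, mul_zero, smul_empty, tail_cons, empty_vecMul, add_zero, add_cons, zero_add,
      empty_add_empty, empty_mul, Equiv.symm_apply_apply, of_apply, cons_val', cons_val_zero,
      cons_val_one, cons_val_fin_one, one_smul, zero_smul, Matrix.smul_apply] <;>
    linarith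

theorem lowerTriangular_preserves_br3 (x21 x22 x31 x32 : ℝ) (x y : Fin 3 → ℝ) :
    !![1, 0, 0; x21, x22, 0; x31, x32, x22] *ᵥ br3 x y =
      br3 (!![1, 0, 0; x21, x22, 0; x31, x32, x22] *ᵥ x)
        (!![1, 0, 0; x21, x22, 0; x31, x32, x22] *ᵥ y) := by
  funext i
  fin_cases i <;> simp [br3, mulVec, dotProduct, Fin.sum_univ_three] <;> ring

end

/-- The automorphisms of 𝔯₃ are exactly the matrices
    [[1,0,0],[x₂₁,x₂₂,0],[x₃₁,x₃₂,x₂₂]] with x₂₂ ≠ 0. -/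
theorem automorphisms_r3 :
    {g : Matrix (Fin 3) (Fin 3) ℝ |
      IsUnit g ∧ ∀ x y, g.mulVec (br3 x y) = br3 (g.mulVec x) (g.mulVec y)} =
    {g : Matrix (Fin 3) (Fin 3) ℝ |
      ∃ x21 x22 x31 x32 : ℝ, x22 ≠ 0 ∧ g = !![1,0,0; x21,x22,0; x31,x32,x22]} := by
  ext g
  constructor
  · rintro ⟨hu, hb⟩
    obtain ⟨h01, h02⟩ := first_row_of_preserves_br3 hb
    have hdet : g 0 0 * (!![g 1 1, g 1 2; g 2 1, g 2 2] : Matrix _ _ ℝ).det ≠ 0 := by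
      rw [det_fin_two_of]
      convert ((isUnit_iff_isUnit_det g).mp hu).ne_zero using 1
      rw [det_fin_three, h01, h02]
      ring
    obtain ⟨h00, h12, h22⟩ := eq_one_and_lowerTriangular_of_mul_unipotent_eq_smul
      (right_ne_zero_of_mul hdet) (intertwines_of_preserves_br3 hb h01 h02)
    simp only [of_apply, cons_val', cons_val_one, cons_val_fin_one, cons_val_zero] at h12 h22
    have h11 : g 1 1 ≠ 0 := fun h => hdet (by rw [det_fin_two_of, h12, h22, h]; ring)
    refine ⟨g 1 0, g 1 1, g 2 0, g 2 1, h11, ?_⟩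
    conv_lhs => rw [eta_fin_three g, h00, h01, h02, h12, h22]
  · rintro ⟨x21, x22, x31, x32, h, rfl⟩
    refine ⟨?_, lowerTriangular_preserves_br3 x21 x22 x31 x32⟩
    rw [isUnit_iff_isUnit_det, det_fin_three]
    simpa using h
end

section
/- Let F be the set of 3×3 real matrices of the form [[x₁₁,0,0],[x₂₁,x₂₂,0],[x₃₁,0,x₂₂]] with x₁₁, x₂₂ > 0. Then for every g ∈ GL₃(ℝ) there exist φ ∈ F, k ∈ O(3), and reals a₃₂ ∈ ℝ, a₃₃ > 0 such that φ g k = [[1,0,0],[0,1,0],[0,a₃₂,a₃₃]]. -/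
/-!
Factor `g = L * Q` with `L` lower triangular with positive diagonal and `Q` orthogonal: if `W` is
the inverse factor of the LDL decomposition of `g gᵀ`, the rows of `W g` are orthogonal, and
normalising them (then fixing signs) gives `Q`. Multiplying `L` on the left by a suitable `φ ∈ F`
scales its first two diagonal entries to `1` and clears its first column below the diagonal,
which leaves `[[1,0,0],[0,1,0],[0,a₃₂,a₃₃]]`; take `k = Qᵀ`.
-/

open Matrix

namespace Matrix

theorem posDef_mul_transpose_self {n : Type*} [Fintype n] [DecidableEq n] {g : Matrix n n ℝ}
    (hg : IsUnit g.det) : (g * gᵀ).PosDef := by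
  simpa [conjTranspose_eq_transpose_of_trivial] using
    PosDef.mul_conjTranspose_self g (vecMul_injective_iff_isUnit.2 ((isUnit_iff_isUnit_det g).2 hg))

variable {n : Type*} [Fintype n] [LinearOrder n]

theorem exists_eq_isLowerTriangular_mul_orthogonal [WellFoundedLT n] [LocallyFiniteOrderBot n]
    {g : Matrix n n ℝ} (hg : IsUnit g.det) :
    ∃ L Q : Matrix n n ℝ, L.IsLowerTriangular ∧ Q ∈ orthogonalGroup n ℝ ∧ g = L * Q := by
  have hS := posDef_mul_transpose_self hg
  set W := LDL.lowerInv hS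
  set D := LDL.diagEntries hS
  have hWg : W * g * (W * g)ᵀ = diagonal D := by
    rw [transpose_mul, ← Matrix.mul_assoc, Matrix.mul_assoc W,
      ← conjTranspose_eq_transpose_of_trivial]
    exact (LDL.diag_eq_lowerInv_conj hS).symm
  have hD : ∀ i, 0 < D i := by
    rw [← posDef_diagonal_iff, ← LDL.diag, LDL.diag_eq_lowerInv_conj]
    exact hS.mul_mul_conjTranspose_same (vecMul_injective_of_isUnit (isUnit_of_invertible W))
  set r : n → ℝ := fun i => √(D i)
  have hr : ∀ i, r i * r i = D i := fun i => Real.mul_self_sqrt (hD i).le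
  have hr₀ : ∀ i, r i ≠ 0 := fun i => (Real.sqrt_pos.2 (hD i)).ne'
  refine ⟨W⁻¹ * diagonal r, diagonal r⁻¹ * (W * g), ?_, ?_, ?_⟩
  · exact (blockTriangular_inv_of_blockTriangular (M := W)
      fun _ _ => LDL.lowerInv_triangular hS).mul (blockTriangular_diagonal r)
  · rw [mem_orthogonalGroup_iff, transpose_mul, diagonal_transpose, Matrix.mul_assoc,
      ← Matrix.mul_assoc (W * g), hWg, diagonal_mul_diagonal, diagonal_mul_diagonal,
      ← diagonal_one]
    congr 1
    ext i
    rw [Pi.inv_apply, ← hr]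
    field_simp [hr₀ i]
  · rw [Matrix.mul_assoc, ← Matrix.mul_assoc (diagonal r), diagonal_mul_diagonal]
    simp only [Pi.inv_apply, mul_inv_cancel₀ (hr₀ _), diagonal_one, Matrix.one_mul,
      ← Matrix.mul_assoc, inv_mul_of_invertible]

theorem exists_diag_pos_mul_orthogonal_eq_of_isLowerTriangular {L Q : Matrix n n ℝ}
    (hL : L.IsLowerTriangular) (hLdiag : ∀ i, L i i ≠ 0) (hQ : Q ∈ orthogonalGroup n ℝ) :
    ∃ L' Q' : Matrix n n ℝ, L'.IsLowerTriangular ∧ (∀ i, 0 < L' i i) ∧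
      Q' ∈ orthogonalGroup n ℝ ∧ L * Q = L' * Q' := by
  set e : n → ℝ := fun i => if 0 < L i i then 1 else -1
  have he : ∀ i, e i * e i = 1 := fun i => by by_cases h : 0 < L i i <;> simp [e, h]
  have hE : diagonal e ∈ orthogonalGroup n ℝ := by
    rw [mem_orthogonalGroup_iff, diagonal_transpose, diagonal_mul_diagonal]
    simp only [he, diagonal_one]
  refine ⟨L * diagonal e, diagonal e * Q, hL.mul (blockTriangular_diagonal e), fun i => ?_,
    mul_mem hE hQ, ?_⟩
  · rw [mul_diagonal]
    by_cases h : 0 < L i i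
    · simp [e, h]
    · simpa [e, h] using lt_of_le_of_ne (not_lt.1 h) (hLdiag i)
  · rw [Matrix.mul_assoc, ← Matrix.mul_assoc (diagonal e), diagonal_mul_diagonal]
    simp only [he, diagonal_one, Matrix.one_mul]

theorem exists_eq_isLowerTriangular_diag_pos_mul_orthogonal [WellFoundedLT n]
    [LocallyFiniteOrderBot n] {g : Matrix n n ℝ} (hg : IsUnit g.det) :
    ∃ L Q : Matrix n n ℝ, L.IsLowerTriangular ∧ (∀ i, 0 < L i i) ∧
      Q ∈ orthogonalGroup n ℝ ∧ g = L * Q := by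
  obtain ⟨L, Q, hL, hQ, rfl⟩ := exists_eq_isLowerTriangular_mul_orthogonal hg
  have hLdiag : ∀ i, L i i ≠ 0 := by
    rw [det_mul] at hg
    have hLdet := (isUnit_of_mul_isUnit_left hg).ne_zero
    rw [det_of_isLowerTriangular L hL, Finset.prod_ne_zero_iff] at hLdet
    exact fun i => hLdet i (Finset.mem_univ i)
  exact exists_diag_pos_mul_orthogonal_eq_of_isLowerTriangular hL hLdiag hQ

end Matrix

theorem fin_three_mul_isLowerTriangular_eq {L : Matrix (Fin 3) (Fin 3) ℝ}
    (hL : L.IsLowerTriangular) (h₀ : L 0 0 ≠ 0) (h₁ : L 1 1 ≠ 0) :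
    !![(L 0 0)⁻¹, 0, 0; -L 1 0 / (L 0 0 * L 1 1), (L 1 1)⁻¹, 0;
        -L 2 0 / (L 0 0 * L 1 1), 0, (L 1 1)⁻¹] * L =
      !![1, 0, 0; 0, 1, 0; 0, L 2 1 / L 1 1, L 2 2 / L 1 1] := by
  have h01 : L 0 1 = 0 := hL (by decide)
  have h02 : L 0 2 = 0 := hL (by decide)
  have h12 : L 1 2 = 0 := hL (by decide)
  ext i j
  fin_cases i <;> fin_cases j <;> simp [mul_apply, Fin.sum_univ_three, h01, h02, h12] <;>
    field_simp <;> ring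

/-- For every g ∈ GL₃(ℝ) there are φ ∈ F, k ∈ O(3) and a₃₂ ∈ ℝ, a₃₃ > 0 with
    φ g k = [[1,0,0],[0,1,0],[0,a₃₂,a₃₃]]. -/
theorem representatives_lemma (g : Matrix (Fin 3) (Fin 3) ℝ) (hg : IsUnit g.det) :
    ∃ (φ k : Matrix (Fin 3) (Fin 3) ℝ) (a32 a33 : ℝ),
      (∃ x11 x21 x22 x31 : ℝ, 0 < x11 ∧ 0 < x22 ∧
        φ = !![x11,0,0; x21,x22,0; x31,0,x22]) ∧
      k * kᵀ = 1 ∧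
      0 < a33 ∧
      φ * g * k = !![1,0,0; 0,1,0; 0,a32,a33] := by
  obtain ⟨L, Q, hL, hLpos, hQ, rfl⟩ := exists_eq_isLowerTriangular_diag_pos_mul_orthogonal hg
  refine ⟨_, Qᵀ, L 2 1 / L 1 1, L 2 2 / L 1 1,
    ⟨(L 0 0)⁻¹, -L 1 0 / (L 0 0 * L 1 1), (L 1 1)⁻¹, -L 2 0 / (L 0 0 * L 1 1),
      inv_pos.2 (hLpos 0), inv_pos.2 (hLpos 1), rfl⟩,
    by rw [transpose_transpose]; exact (mem_orthogonalGroup_iff' _ _).1 hQ,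
    div_pos (hLpos 2) (hLpos 1), ?_⟩
  rw [Matrix.mul_assoc, Matrix.mul_assoc, (mem_orthogonalGroup_iff _ _).1 hQ, Matrix.mul_one]
  exact fin_three_mul_isLowerTriangular_eq hL (hLpos 0).ne' (hLpos 1).ne'
end
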